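/- Let s be as in the context (any of the four cases). If β₁, β₂ ∈ Δ^C then d(β₁) = d(β₂) if and only if col(β₁) = col(β₂); and if δ₁, δ₂ ∈ Δ^R then d(δ₁) = d(δ₂) if and only if row(δ₁) = row(δ₂). -/
import Mathlib


/- Common framework: type A_l root system realized in ℝ^{ℕ} (coordinates 1,…,l+1 used),
   the Weyl group as permutations of ℕ acting by permuting coordinates, and the
   Weyl group element s = s₁s₂ of Proposition 4.2 (all four parity cases). -/

noncomputable section

namespace DPW

/-- The ambient vector space (only coordinates 1,…,l+1 are used). -/
abbrev V : Type := ℕ → ℝ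

/-- Standard basis vector e_i. -/
def evec (i : ℕ) : V := fun j => if j = i then 1 else 0

/-- The root e_i − e_j. -/
def rt (i j : ℕ) : V := evec i - evec j

/-- The root system Δ of type A_l. -/
def Delta (l : ℕ) : Set V :=
  {v | ∃ i j, 1 ≤ i ∧ i ≤ l + 1 ∧ 1 ≤ j ∧ j ≤ l + 1 ∧ i ≠ j ∧ v = rt i j}

/-- Positive roots Δ₊. -/
def DeltaPos (l : ℕ) : Set V :=
  {v | ∃ i j, 1 ≤ i ∧ i < j ∧ j ≤ l + 1 ∧ v = rt i j}

/-- Negative roots Δ₋ = −Δ₊. -/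
def DeltaNeg (l : ℕ) : Set V := {v | -v ∈ DeltaPos l}

/-- Action of a permutation on V : (σ·v)_j = v_{σ⁻¹(j)}. -/
def pact (σ : Equiv.Perm ℕ) (v : V) : V := fun j => v (σ⁻¹ j)

/-- row(e_a − e_b) = a. -/
def rowOf (v : V) : ℕ := sInf {a | v a = 1}

/-- col(e_a − e_b) = b. -/
def colOf (v : V) : ℕ := sInf {b | v b = (-1 : ℝ)}

/-- Product of the simple reflections s_{α_i} = (i, i+1) for i in a list. -/
def swapProd (idxs : List ℕ) : Equiv.Perm ℕ :=
  (idxs.map (fun i => Equiv.swap i (i + 1))).prod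

/-- The Weyl group element s = s₁s₂ (cases (i)–(iv) according to the parities of
    m = ⌊(l′−1)/2⌋ and l′; here p = l − l′ and s_γ = (m+1, m+p+2)). -/
def weylS (l l' : ℕ) : Equiv.Perm ℕ :=
  let m := (l' - 1) / 2
  let p := l - l'
  if m % 2 = 0 then
    if l' % 2 = 1 then
      -- case (i)
      (swapProd (List.range' 2 (m / 2) 2) * swapProd (List.range' (m + p + 2) (m / 2) 2)) *
        (swapProd (List.range' 1 (m / 2) 2) * Equiv.swap (m + 1) (m + p + 2) *
          swapProd (List.range' (m + p + 3) (m / 2) 2))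
    else
      -- case (ii)
      (swapProd (List.range' 2 (m / 2) 2) * swapProd (List.range' (m + p + 2) (m / 2 + 1) 2)) *
        (swapProd (List.range' 1 (m / 2) 2) * Equiv.swap (m + 1) (m + p + 2) *
          swapProd (List.range' (m + p + 3) (m / 2) 2))
  else
    if l' % 2 = 1 then
      -- case (iii)
      (swapProd (List.range' 1 ((m + 1) / 2) 2) *
          swapProd (List.range' (m + p + 2) ((m + 1) / 2) 2)) *
        (swapProd (List.range' 2 ((m - 1) / 2) 2) * Equiv.swap (m + 1) (m + p + 2) *
          swapProd (List.range' (m + p + 3) ((m - 1) / 2) 2))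
    else
      -- case (iv)
      (swapProd (List.range' 1 ((m + 1) / 2) 2) *
          swapProd (List.range' (m + p + 2) ((m + 1) / 2) 2)) *
        (swapProd (List.range' 2 ((m - 1) / 2) 2) * Equiv.swap (m + 1) (m + p + 2) *
          swapProd (List.range' (m + p + 3) ((m + 1) / 2) 2))

/-- Δ_s = {α ∈ Δ₊ : sα ∈ Δ₋}. -/
def DeltaS (l : ℕ) (s : Equiv.Perm ℕ) : Set V :=
  {v ∈ DeltaPos l | pact s v ∈ DeltaNeg l}

/-- Δ_{s⁻¹} = {α ∈ Δ₊ : s⁻¹α ∈ Δ₋}. -/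
def DeltaSinv (l : ℕ) (s : Equiv.Perm ℕ) : Set V :=
  {v ∈ DeltaPos l | pact s⁻¹ v ∈ DeltaNeg l}

/-- (Δ̄_K)₊ = {α ∈ Δ₊ : sα ≠ α}. -/
def DeltaKpos (l : ℕ) (s : Equiv.Perm ℕ) : Set V :=
  {v ∈ DeltaPos l | pact s v ≠ v}

/-- (Δ̄_K)₋ = −(Δ̄_K)₊. -/
def DeltaKneg (l : ℕ) (s : Equiv.Perm ℕ) : Set V := {v | -v ∈ DeltaKpos l s}

/-- Δ^C = {α ∈ (Δ̄_K)₊ : row(sα) = row(α)}. -/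
def DeltaC (l : ℕ) (s : Equiv.Perm ℕ) : Set V :=
  {v ∈ DeltaKpos l s | rowOf (pact s v) = rowOf v}

/-- Δ^R = {α ∈ (Δ̄_K)₊ : col(sα) = col(α)}. -/
def DeltaR (l : ℕ) (s : Equiv.Perm ℕ) : Set V :=
  {v ∈ DeltaKpos l s | colOf (pact s v) = colOf v}

/-- Δ^O = (Δ̄_K)₊ \ (Δ^C ∪ Δ^R). -/
def DeltaO (l : ℕ) (s : Equiv.Perm ℕ) : Set V :=
  DeltaKpos l s \ (DeltaC l s ∪ DeltaR l s)

/-- Δ₁^O = {α ∈ Δ^O : row(α) ≥ m+p+2}. -/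
def DeltaO1 (l : ℕ) (s : Equiv.Perm ℕ) (m p : ℕ) : Set V :=
  {v ∈ DeltaO l s | m + p + 2 ≤ rowOf v}

/-- Δ₂^O = {α ∈ Δ^O : col(α) ≤ m+1}. -/
def DeltaO2 (l : ℕ) (s : Equiv.Perm ℕ) (m : ℕ) : Set V :=
  {v ∈ DeltaO l s | colOf v ≤ m + 1}

/-- Δ₃^O = Δ^O \ (Δ₁^O ∪ Δ₂^O). -/
def DeltaO3 (l : ℕ) (s : Equiv.Perm ℕ) (m p : ℕ) : Set V :=
  DeltaO l s \ (DeltaO1 l s m p ∪ DeltaO2 l s m)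

/-- Δ̄_K^k = {α ∈ (Δ̄_K)₊ : s^{−j}α ∈ (Δ̄_K)₊ for 1 ≤ j ≤ k−1 and s^{−k}α ∈ (Δ̄_K)₋}. -/
def DeltaKk (l : ℕ) (s : Equiv.Perm ℕ) (k : ℕ) : Set V :=
  {v ∈ DeltaKpos l s |
    (∀ j, 1 ≤ j → j ≤ k - 1 → pact (s⁻¹ ^ j) v ∈ DeltaKpos l s) ∧
      pact (s⁻¹ ^ k) v ∈ DeltaKneg l s}

/-- d(α) = min{k ≥ 1 : s^{−k}α ∈ Δ₋}. -/
def dd (l : ℕ) (s : Equiv.Perm ℕ) (v : V) : ℕ :=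
  sInf {k | 1 ≤ k ∧ pact (s⁻¹ ^ k) v ∈ DeltaNeg l}

/-- Δ_Z = {e_i − e_j : m+2 ≤ i, j ≤ m+p+1, i ≠ j}. -/
def DeltaZ (m p : ℕ) : Set V :=
  {v | ∃ i j, m + 2 ≤ i ∧ i ≤ m + p + 1 ∧ m + 2 ≤ j ∧ j ≤ m + p + 1 ∧ i ≠ j ∧ v = rt i j}

/-- The ⟨s⟩-orbit of a vector. -/
def orbitOf (s : Equiv.Perm ℕ) (v : V) : Set V := {w | ∃ n : ℤ, w = pact (s ^ n) v}

/-- The set P_κ (for κ ∈ Δ̄_K^k). -/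
def Pk (l : ℕ) (s : Equiv.Perm ℕ) (k : ℕ) (κ : V) : Set (V × V) :=
  {q | (∃ i, 2 ≤ i ∧ i ≤ k - 1 ∧ q.1 ∈ DeltaKk l s i) ∧ q.2 ∈ DeltaKk l s k ∧ κ = q.1 + q.2}

/-- The set P′_κ (for κ ∈ Δ̄_K^k). -/
def Pk' (l : ℕ) (s : Equiv.Perm ℕ) (k : ℕ) (κ : V) : Set (V × V) :=
  {q | q.1 ∈ DeltaKk l s k ∧ q.2 ∈ DeltaKk l s k ∧ κ = q.1 + q.2}

/-- The eigenvector v^λ of case (i) (m even, l′ = 2m+1 odd). -/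
def vlam (m p : ℕ) (lam : ℂ) : ℕ → ℂ := fun j =>
  if j = 0 then 0
  else if j ≤ m + 1 then
    (if j % 2 = 1 then lam ^ ((4 * m + 5 - j) / 2) else lam ^ (j / 2))
  else if j ≤ m + p + 1 then 0
  else if j ≤ m + p + m + 2 then
    (if (j - (m + p)) % 2 = 0 then lam ^ ((m + (j - (m + p))) / 2)
     else lam ^ ((3 * m + 5 - (j - (m + p))) / 2))
  else 0



/- ====================  Auxiliary development  ==================== -/

/-- Explicit uniform formula for the element s (all four cases), with q = m + p. -/
def sFun (l m q x : ℕ) : ℕ :=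
  if x < 1 ∨ l + 1 < x then x
  else if x ≤ m + 1 then
    if x = m + 1 then q + 3
    else if x % 2 = (m + 1) % 2 then x + 2
    else if 3 ≤ x then x - 2 else 3 - x
  else if x ≤ q + 1 then x
  else if x = q + 2 then m
  else if (x - q) % 2 = 0 then x - 2
  else if x + 2 ≤ l + 1 then x + 2
  else 2 * l + 1 - x

def Ffn (a n x : ℕ) : ℕ :=
  if a ≤ x ∧ x < a + 2 * n then (if (x - a) % 2 = 0 then x + 1 else x - 1) else x
def Wfn (u v x : ℕ) : ℕ := if x = u then v else if x = v then u else x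

lemma swapProd_apply' : ∀ (n a x : ℕ), swapProd (List.range' a n 2) x = Ffn a n x := by
  intro n
  induction n with
  | zero =>
    intro a x
    have h : swapProd (List.range' a 0 2) = 1 := by simp [swapProd]
    rw [h]
    unfold Ffn
    split_ifs <;> simp <;> omega
  | succ n ih =>
    intro a x
    rw [List.range'_succ]
    have h : swapProd (a :: List.range' (a + 2) n 2)
        = Equiv.swap a (a + 1) * swapProd (List.range' (a + 2) n 2) := by
      simp [swapProd]
    rw [h, Equiv.Perm.mul_apply, ih, Equiv.swap_apply_def]
    unfold Ffn
    split_ifs <;> omega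

lemma swap_apply' (u v x : ℕ) : Equiv.swap u v x = Wfn u v x := Equiv.swap_apply_def u v x

def s2Fun (m q c2 n2 n2' x : ℕ) : ℕ :=
  if c2 ≤ x ∧ x < c2 + 2 * n2 then (if (x - c2) % 2 = 0 then x + 1 else x - 1)
  else if x = m + 1 then q + 2
  else if x = q + 2 then m + 1
  else if q + 3 ≤ x ∧ x < q + 3 + 2 * n2' then (if (x - (q + 3)) % 2 = 0 then x + 1 else x - 1)
  else x

def s1Fun (q c1 n1 n1' x : ℕ) : ℕ :=
  if c1 ≤ x ∧ x < c1 + 2 * n1 then (if (x - c1) % 2 = 0 then x + 1 else x - 1)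
  else if q + 2 ≤ x ∧ x < q + 2 + 2 * n1' then (if (x - (q + 2)) % 2 = 0 then x + 1 else x - 1)
  else x

set_option maxHeartbeats 2000000 in
lemma s2_eval (m q c2 n2 n2' x : ℕ) (h4 : c2 + 2 * n2 = m + 1) (h9 : m ≤ q) (hc2 : 1 ≤ c2) :
    Ffn c2 n2 (Wfn (m + 1) (q + 2) (Ffn (q + 3) n2' x)) = s2Fun m q c2 n2 n2' x := by
  unfold Ffn Wfn s2Fun; split_ifs <;> omega

set_option maxHeartbeats 2000000 in
lemma s1_eval (q c1 n1 n1' y : ℕ) (h : c1 + 2 * n1 ≤ q + 2) (hc1 : 1 ≤ c1) :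
    Ffn c1 n1 (Ffn (q + 2) n1' y) = s1Fun q c1 n1 n1' y := by
  unfold Ffn s1Fun; split_ifs <;> omega

set_option maxHeartbeats 8000000 in
lemma comp_i (q k x : ℕ) (hk : 1 ≤ k) (hq : 2 * k ≤ q) :
    s1Fun q 2 k k (s2Fun (2 * k) q 1 k k x) = sFun (q + 2 * k + 1) (2 * k) q x := by
  unfold s1Fun s2Fun sFun; split_ifs <;> omega

set_option maxHeartbeats 8000000 in
lemma comp_ii (q k x : ℕ) (hk : 1 ≤ k) (hq : 2 * k ≤ q) :
    s1Fun q 2 k (k + 1) (s2Fun (2 * k) q 1 k k x) = sFun (q + 2 * k + 2) (2 * k) q x := by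
  unfold s1Fun s2Fun sFun; split_ifs <;> omega

set_option maxHeartbeats 8000000 in
lemma comp_iii (q k x : ℕ) (hk : 1 ≤ k) (hq : 2 * k + 1 ≤ q) :
    s1Fun q 1 (k + 1) (k + 1) (s2Fun (2 * k + 1) q 2 k k x)
      = sFun (q + 2 * k + 2) (2 * k + 1) q x := by
  unfold s1Fun s2Fun sFun; split_ifs <;> omega

set_option maxHeartbeats 8000000 in
lemma comp_iv (q k x : ℕ) (hk : 1 ≤ k) (hq : 2 * k + 1 ≤ q) :
    s1Fun q 1 (k + 1) (k + 1) (s2Fun (2 * k + 1) q 2 k (k + 1) x)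
      = sFun (q + 2 * k + 3) (2 * k + 1) q x := by
  unfold s1Fun s2Fun sFun; split_ifs <;> omega

lemma weylS_eq_sFun (l l' m p : ℕ) (h5 : 5 ≤ l') (hll : l' ≤ l)
    (hm : m = (l' - 1) / 2) (hp : p = l - l') (x : ℕ) :
    weylS l l' x = sFun l m (m + p) x := by
  have hm2 : 2 ≤ m := by omega
  have hml : (l' - 1) / 2 = m := hm.symm
  rcases Nat.even_or_odd m with hme | hmo
  · obtain ⟨k, hk⟩ := hme
    have hk' : m = 2 * k := by omega
    have hk1 : 1 ≤ k := by omega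
    have h2 : m / 2 = k := by omega
    rcases Nat.even_or_odd l' with hle | hlo
    · -- case (ii)
      obtain ⟨u, hu⟩ := hle
      have hlq : l = m + p + 2 * k + 2 := by omega
      rw [weylS]
      simp only [hml, hp.symm, h2]
      rw [if_pos (by omega), if_neg (by omega)]
      simp only [Equiv.Perm.mul_apply, swapProd_apply', swap_apply']
      rw [s2_eval m (m + p) 1 k k x (by omega) (by omega) (by omega),
        s1_eval (m + p) 2 k (k + 1) _ (by omega) (by omega), hlq, hk']
      exact comp_ii (2 * k + p) k x hk1 (by omega)
    · -- case (i)
      obtain ⟨u, hu⟩ := hlo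
      have hlq : l = m + p + 2 * k + 1 := by omega
      rw [weylS]
      simp only [hml, hp.symm, h2]
      rw [if_pos (by omega), if_pos (by omega)]
      simp only [Equiv.Perm.mul_apply, swapProd_apply', swap_apply']
      rw [s2_eval m (m + p) 1 k k x (by omega) (by omega) (by omega),
        s1_eval (m + p) 2 k k _ (by omega) (by omega), hlq, hk']
      exact comp_i (2 * k + p) k x hk1 (by omega)
  · obtain ⟨k, hk⟩ := hmo
    have hk' : m = 2 * k + 1 := by omega
    have hk1 : 1 ≤ k := by omega
    have h2 : (m + 1) / 2 = k + 1 := by omega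
    have h3 : (m - 1) / 2 = k := by omega
    rcases Nat.even_or_odd l' with hle | hlo
    · -- case (iv)
      obtain ⟨u, hu⟩ := hle
      have hlq : l = m + p + 2 * k + 3 := by omega
      rw [weylS]
      simp only [hml, hp.symm, h2, h3]
      rw [if_neg (by omega), if_neg (by omega)]
      simp only [Equiv.Perm.mul_apply, swapProd_apply', swap_apply']
      rw [s2_eval m (m + p) 2 k (k + 1) x (by omega) (by omega) (by omega),
        s1_eval (m + p) 1 (k + 1) (k + 1) _ (by omega) (by omega), hlq, hk']
      have := comp_iv (2 * k + 1 + p) k x hk1 (by omega)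
      convert this using 2 <;> omega
    · -- case (iii)
      obtain ⟨u, hu⟩ := hlo
      have hlq : l = m + p + 2 * k + 2 := by omega
      rw [weylS]
      simp only [hml, hp.symm, h2, h3]
      rw [if_neg (by omega), if_pos (by omega)]
      simp only [Equiv.Perm.mul_apply, swapProd_apply', swap_apply']
      rw [s2_eval m (m + p) 2 k k x (by omega) (by omega) (by omega),
        s1_eval (m + p) 1 (k + 1) (k + 1) _ (by omega) (by omega), hlq, hk']
      have := comp_iii (2 * k + 1 + p) k x hk1 (by omega)
      convert this using 2 <;> omega

/- ====================  Root-system basics  ==================== -/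

lemma rt_apply (i j x : ℕ) :
    rt i j x = (if x = i then (1:ℝ) else 0) - (if x = j then 1 else 0) := rfl

lemma rt_apply_eq_one {i j : ℕ} (x : ℕ) : rt i j x = 1 ↔ x = i ∧ x ≠ j := by
  rw [rt_apply]; split_ifs with h1 h2 <;> norm_num <;> tauto

lemma rt_apply_eq_negone {i j : ℕ} (x : ℕ) : rt i j x = -1 ↔ x = j ∧ x ≠ i := by
  rw [rt_apply]; split_ifs with h1 h2 <;> norm_num <;> tauto

lemma rowOf_rt {i j : ℕ} (h : i ≠ j) : rowOf (rt i j) = i := by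
  have hset : {a | rt i j a = 1} = {i} := by
    ext x; simp only [Set.mem_setOf_eq, Set.mem_singleton_iff, rt_apply_eq_one]
    exact ⟨fun ⟨h1, _⟩ => h1, fun h1 => ⟨h1, h1 ▸ h⟩⟩
  rw [rowOf, hset, csInf_singleton]

lemma colOf_rt {i j : ℕ} (h : i ≠ j) : colOf (rt i j) = j := by
  have hset : {a | rt i j a = (-1:ℝ)} = {j} := by
    ext x; simp only [Set.mem_setOf_eq, Set.mem_singleton_iff, rt_apply_eq_negone]
    exact ⟨fun ⟨h1, _⟩ => h1, fun h1 => ⟨h1, h1 ▸ h.symm⟩⟩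
  rw [colOf, hset, csInf_singleton]

lemma neg_rt (i j : ℕ) : -(rt i j) = rt j i := by unfold rt; rw [neg_sub]

lemma rt_eq_rt {a b x y : ℕ} (hab : a ≠ b) (hxy : x ≠ y) (h : rt a b = rt x y) :
    a = x ∧ b = y := by
  have h1 : rt x y a = 1 := by rw [← h, rt_apply_eq_one]; exact ⟨rfl, hab⟩
  have h2 : rt x y b = -1 := by rw [← h, rt_apply_eq_negone]; exact ⟨rfl, hab.symm⟩
  rw [rt_apply_eq_one] at h1; rw [rt_apply_eq_negone] at h2
  exact ⟨h1.1, h2.1⟩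

lemma pact_rt (σ : Equiv.Perm ℕ) (i j : ℕ) : pact σ (rt i j) = rt (σ i) (σ j) := by
  funext x
  have h1 : (σ⁻¹ x = i) ↔ (x = σ i) := by
    constructor
    · intro h; rw [← h]; simp
    · intro h; rw [h]; simp
  have h2 : (σ⁻¹ x = j) ↔ (x = σ j) := by
    constructor
    · intro h; rw [← h]; simp
    · intro h; rw [h]; simp
  show rt i j (σ⁻¹ x) = _
  rw [rt_apply, rt_apply, if_congr h1 rfl rfl, if_congr h2 rfl rfl]

lemma rt_mem_DeltaNeg_iff {l a b : ℕ} (hab : a ≠ b) :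
    rt a b ∈ DeltaNeg l ↔ 1 ≤ b ∧ b < a ∧ a ≤ l + 1 := by
  constructor
  · rintro ⟨x, y, hx, hxy, hyl, heq⟩
    rw [neg_rt] at heq
    obtain ⟨rfl, rfl⟩ := rt_eq_rt hab.symm (by omega) heq
    omega
  · rintro ⟨h1, h2, h3⟩
    exact ⟨b, a, h1, h2, h3, (neg_rt a b)⟩

/- ====================  Trajectories  ==================== -/

/-- U-трajectory: cU 0 = q+3 = s(m+1), …, cU (l-q-1) = q+2. -/
def cU (l q t : ℕ) : ℕ := if 2 * t + 2 ≤ l - q then q + 3 + 2 * t else 2 * l - q - 2 * t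

/-- L-trajectory: cL 0 = m = s(q+2), …, cL m = m+1. -/
def cL (m t : ℕ) : ℕ := if 2 * t + 1 ≤ m then m - 2 * t else 2 * t + 1 - m

lemma cU_mem {l q t m : ℕ} (hq : m ≤ q) (hl1 : q + m + 1 ≤ l) (ht : t ≤ l - q - 1) :
    q + 2 ≤ cU l q t ∧ cU l q t ≤ l + 1 := by unfold cU; split_ifs <;> omega

lemma cU_inj {l q m : ℕ} (hq : m ≤ q) (hl1 : q + m + 1 ≤ l) {t t' : ℕ}
    (ht : t ≤ l - q - 1) (ht' : t' ≤ l - q - 1) (h : cU l q t = cU l q t') : t = t' := by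
  unfold cU at h; split_ifs at h <;> omega

lemma cU_surj {l q m : ℕ} (hq : m ≤ q) (hl1 : q + m + 1 ≤ l) {j : ℕ}
    (hj1 : q + 2 ≤ j) (hj2 : j ≤ l + 1) : ∃ t, t ≤ l - q - 1 ∧ cU l q t = j := by
  by_cases hpar : (j - q) % 2 = 1
  · exact ⟨(j - q - 3) / 2, by omega, by unfold cU; split_ifs <;> omega⟩
  · exact ⟨(2 * l - q - j) / 2, by omega, by unfold cU; split_ifs <;> omega⟩

lemma cL_mem {m t : ℕ} (hm2 : 2 ≤ m) (ht : t ≤ m) : 1 ≤ cL m t ∧ cL m t ≤ m + 1 := by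
  unfold cL; split_ifs <;> omega

lemma cL_inj {m t t' : ℕ} (ht : t ≤ m) (ht' : t' ≤ m) (h : cL m t = cL m t') : t = t' := by
  unfold cL at h; split_ifs at h <;> omega

lemma cL_surj {m : ℕ} (hm2 : 2 ≤ m) {i : ℕ} (hi1 : 1 ≤ i) (hi2 : i ≤ m + 1) :
    ∃ t, t ≤ m ∧ cL m t = i := by
  by_cases hpar : i % 2 = m % 2
  · exact ⟨(m - i) / 2, by omega, by unfold cL; split_ifs <;> omega⟩
  · exact ⟨(m + i - 1) / 2, by omega, by unfold cL; split_ifs <;> omega⟩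

section params
variable {l m q : ℕ} (hm2 : 2 ≤ m) (hq : m ≤ q) (hl1 : q + m + 1 ≤ l) (hl2 : l ≤ q + m + 2)
variable (s : Equiv.Perm ℕ) (hs : ∀ x, s x = sFun l m q x)

include hm2 hq hl1 hl2 hs

lemma s_fix {x : ℕ} (h : x = 0 ∨ (m + 2 ≤ x ∧ x ≤ q + 1) ∨ l + 2 ≤ x) : s x = x := by
  rw [hs]; unfold sFun; split_ifs <;> omega

lemma s_move {x : ℕ} (h : (1 ≤ x ∧ x ≤ m + 1) ∨ (q + 2 ≤ x ∧ x ≤ l + 1)) : s x ≠ x := by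
  rw [hs]; unfold sFun; split_ifs <;> omega

lemma sinv_fix {x : ℕ} (h : x = 0 ∨ (m + 2 ≤ x ∧ x ≤ q + 1) ∨ l + 2 ≤ x) : s⁻¹ x = x := by
  rw [Equiv.Perm.inv_eq_iff_eq]; exact (s_fix hm2 hq hl1 hl2 s hs h).symm

lemma sinvpow_fix {x : ℕ} (h : x = 0 ∨ (m + 2 ≤ x ∧ x ≤ q + 1) ∨ l + 2 ≤ x) (k : ℕ) :
    (s⁻¹ ^ k) x = x := by
  induction k with
  | zero => simp
  | succ n ih => rw [pow_succ, Equiv.Perm.mul_apply, sinv_fix hm2 hq hl1 hl2 s hs h, ih]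

lemma s_step_U {t : ℕ} (ht : t < l - q - 1) : s (cU l q t) = cU l q (t + 1) := by
  rw [hs]; unfold cU sFun; split_ifs <;> omega

lemma s_to_cU0 : s (m + 1) = cU l q 0 := by
  rw [hs]; unfold cU sFun; split_ifs <;> omega

lemma s_step_L {t : ℕ} (ht : t < m) : s (cL m t) = cL m (t + 1) := by
  rw [hs]; unfold cL sFun; split_ifs <;> omega

lemma s_to_cL0 : s (q + 2) = cL m 0 := by
  rw [hs]; unfold cL sFun; split_ifs <;> omega

lemma cU_iter {t : ℕ} (ht : t ≤ l - q - 1) :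
    ∀ k, k ≤ t → (s⁻¹ ^ k) (cU l q t) = cU l q (t - k) := by
  intro k
  induction k with
  | zero => intro _; simp
  | succ n ih =>
    intro hn
    rw [pow_succ', Equiv.Perm.mul_apply, ih (by omega)]
    rw [Equiv.Perm.inv_eq_iff_eq]
    have h : t - n = (t - (n + 1)) + 1 := by omega
    rw [h, s_step_U hm2 hq hl1 hl2 s hs (by omega)]

lemma cU_exit {t : ℕ} (ht : t ≤ l - q - 1) : (s⁻¹ ^ (t + 1)) (cU l q t) = m + 1 := by
  rw [pow_succ', Equiv.Perm.mul_apply, cU_iter hm2 hq hl1 hl2 s hs ht t le_rfl]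
  simp only [Nat.sub_self]
  rw [Equiv.Perm.inv_eq_iff_eq]
  exact (s_to_cU0 hm2 hq hl1 hl2 s hs).symm

lemma cL_iter {t : ℕ} (ht : t ≤ m) :
    ∀ k, k ≤ t → (s⁻¹ ^ k) (cL m t) = cL m (t - k) := by
  intro k
  induction k with
  | zero => intro _; simp
  | succ n ih =>
    intro hn
    rw [pow_succ', Equiv.Perm.mul_apply, ih (by omega)]
    rw [Equiv.Perm.inv_eq_iff_eq]
    have h : t - n = (t - (n + 1)) + 1 := by omega
    rw [h, s_step_L hm2 hq hl1 hl2 s hs (by omega)]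

lemma cL_exit {t : ℕ} (ht : t ≤ m) : (s⁻¹ ^ (t + 1)) (cL m t) = q + 2 := by
  rw [pow_succ', Equiv.Perm.mul_apply, cL_iter hm2 hq hl1 hl2 s hs ht t le_rfl]
  simp only [Nat.sub_self]
  rw [Equiv.Perm.inv_eq_iff_eq]
  exact (s_to_cL0 hm2 hq hl1 hl2 s hs).symm

/- ====================  d-values on Δ^C and Δ^R  ==================== -/

lemma dd_DeltaC {β : V} (hβ : β ∈ DeltaC l s) :
    ∃ t, t ≤ l - q - 1 ∧ colOf β = cU l q t ∧ dd l s β = t + 1 := by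
  obtain ⟨⟨⟨i, j, hi1, hij, hjl, rfl⟩, hne⟩, hrow⟩ := hβ
  have hijne : i ≠ j := by omega
  rw [pact_rt, rowOf_rt (s.injective.ne hijne), rowOf_rt hijne] at hrow
  have hsj : s j ≠ j := by
    intro hj
    apply hne
    rw [pact_rt, hrow, hj]
  have hiloc : m + 2 ≤ i ∧ i ≤ q + 1 := by
    by_contra hcon
    have := s_move hm2 hq hl1 hl2 s hs (x := i) (by omega)
    exact this hrow
  have hjloc : q + 2 ≤ j ∧ j ≤ l + 1 := by
    constructor
    · by_contra hcon
      exact hsj (s_fix hm2 hq hl1 hl2 s hs (x := j) (by omega))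
    · omega
  obtain ⟨t, ht, hcu⟩ := cU_surj (m := m) hq hl1 hjloc.1 hjloc.2
  refine ⟨t, ht, by rw [colOf_rt hijne, hcu], ?_⟩
  have hfixi : ∀ k : ℕ, (s⁻¹ ^ k) i = i :=
    sinvpow_fix hm2 hq hl1 hl2 s hs (by omega)
  have hmem : ∀ k : ℕ, pact (s⁻¹ ^ k) (rt i j) = rt i ((s⁻¹ ^ k) j) := by
    intro k; rw [pact_rt, hfixi]
  have hin : (t + 1) ∈ {k | 1 ≤ k ∧ pact (s⁻¹ ^ k) (rt i j) ∈ DeltaNeg l} := by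
    refine ⟨by omega, ?_⟩
    rw [hmem, ← hcu, cU_exit hm2 hq hl1 hl2 s hs ht]
    rw [rt_mem_DeltaNeg_iff (by omega)]
    omega
  have hlb : ∀ k ∈ {k | 1 ≤ k ∧ pact (s⁻¹ ^ k) (rt i j) ∈ DeltaNeg l}, t + 1 ≤ k := by
    rintro k ⟨hk1, hk2⟩
    by_contra hcon
    rw [hmem, ← hcu, cU_iter hm2 hq hl1 hl2 s hs ht k (by omega)] at hk2
    have hcm := cU_mem (m := m) hq hl1 (t := t - k) (by omega)
    rw [rt_mem_DeltaNeg_iff (by omega)] at hk2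
    omega
  exact le_antisymm (Nat.sInf_le hin) (le_csInf ⟨t + 1, hin⟩ hlb)

lemma dd_DeltaR {δ : V} (hδ : δ ∈ DeltaR l s) :
    ∃ t, t ≤ m ∧ rowOf δ = cL m t ∧ dd l s δ = t + 1 := by
  obtain ⟨⟨⟨i, j, hi1, hij, hjl, rfl⟩, hne⟩, hcol⟩ := hδ
  have hijne : i ≠ j := by omega
  rw [pact_rt, colOf_rt (s.injective.ne hijne), colOf_rt hijne] at hcol
  have hsi : s i ≠ i := by
    intro hi
    apply hne
    rw [pact_rt, hcol, hi]
  have hjloc : m + 2 ≤ j ∧ j ≤ q + 1 := by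
    by_contra hcon
    have := s_move hm2 hq hl1 hl2 s hs (x := j) (by omega)
    exact this hcol
  have hiloc : 1 ≤ i ∧ i ≤ m + 1 := by
    constructor
    · omega
    · by_contra hcon
      exact hsi (s_fix hm2 hq hl1 hl2 s hs (x := i) (by omega))
  obtain ⟨t, ht, hcl⟩ := cL_surj hm2 hiloc.1 hiloc.2
  refine ⟨t, ht, by rw [rowOf_rt hijne, hcl], ?_⟩
  have hfixj : ∀ k : ℕ, (s⁻¹ ^ k) j = j :=
    sinvpow_fix hm2 hq hl1 hl2 s hs (by omega)
  have hmem : ∀ k : ℕ, pact (s⁻¹ ^ k) (rt i j) = rt ((s⁻¹ ^ k) i) j := by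
    intro k; rw [pact_rt, hfixj]
  have hin : (t + 1) ∈ {k | 1 ≤ k ∧ pact (s⁻¹ ^ k) (rt i j) ∈ DeltaNeg l} := by
    refine ⟨by omega, ?_⟩
    rw [hmem, ← hcl, cL_exit hm2 hq hl1 hl2 s hs ht]
    rw [rt_mem_DeltaNeg_iff (by omega)]
    omega
  have hlb : ∀ k ∈ {k | 1 ≤ k ∧ pact (s⁻¹ ^ k) (rt i j) ∈ DeltaNeg l}, t + 1 ≤ k := by
    rintro k ⟨hk1, hk2⟩
    by_contra hcon
    rw [hmem, ← hcl, cL_iter hm2 hq hl1 hl2 s hs ht k (by omega)] at hk2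
    have hcm := cL_mem hm2 (t := t - k) (by omega)
    rw [rt_mem_DeltaNeg_iff (by omega)] at hk2
    omega
  exact le_antisymm (Nat.sInf_le hin) (le_csInf ⟨t + 1, hin⟩ hlb)

lemma main_combined :
    (∀ β₁ ∈ DeltaC l s, ∀ β₂ ∈ DeltaC l s,
        (dd l s β₁ = dd l s β₂ ↔ colOf β₁ = colOf β₂)) ∧
      (∀ δ₁ ∈ DeltaR l s, ∀ δ₂ ∈ DeltaR l s,
        (dd l s δ₁ = dd l s δ₂ ↔ rowOf δ₁ = rowOf δ₂)) := by
  constructor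
  · intro β₁ h₁ β₂ h₂
    obtain ⟨t₁, ht₁, hc₁, hd₁⟩ := dd_DeltaC hm2 hq hl1 hl2 s hs h₁
    obtain ⟨t₂, ht₂, hc₂, hd₂⟩ := dd_DeltaC hm2 hq hl1 hl2 s hs h₂
    rw [hd₁, hd₂, hc₁, hc₂]
    constructor
    · intro h; rw [show t₁ = t₂ by omega]
    · intro h; rw [cU_inj (m := m) hq hl1 ht₁ ht₂ h]
  · intro δ₁ h₁ δ₂ h₂
    obtain ⟨t₁, ht₁, hc₁, hd₁⟩ := dd_DeltaR hm2 hq hl1 hl2 s hs h₁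
    obtain ⟨t₂, ht₂, hc₂, hd₂⟩ := dd_DeltaR hm2 hq hl1 hl2 s hs h₂
    rw [hd₁, hd₂, hc₁, hc₂]
    constructor
    · intro h; rw [show t₁ = t₂ by omega]
    · intro h; rw [cL_inj ht₁ ht₂ h]

end params

/-- on Δ^C, d(β₁) = d(β₂) iff col(β₁) = col(β₂); on Δ^R, d(δ₁) = d(δ₂)
iff row(δ₁) = row(δ₂). -/
theorem stmt8 (l l' m p : ℕ) (h5 : 5 ≤ l') (hll : l' ≤ l)
    (hm : m = (l' - 1) / 2) (hp : p = l - l') :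
    let s := weylS l l'
    (∀ β₁ ∈ DeltaC l s, ∀ β₂ ∈ DeltaC l s,
        (dd l s β₁ = dd l s β₂ ↔ colOf β₁ = colOf β₂)) ∧
      (∀ δ₁ ∈ DeltaR l s, ∀ δ₂ ∈ DeltaR l s,
        (dd l s δ₁ = dd l s δ₂ ↔ rowOf δ₁ = rowOf δ₂)) := by
  have hm2 : 2 ≤ m := by omega
  have hq : m ≤ m + p := by omega
  have hl1 : (m + p) + m + 1 ≤ l := by omega
  have hl2 : l ≤ (m + p) + m + 2 := by omega
  exact main_combined hm2 hq hl1 hl2 (weylS l l') (weylS_eq_sFun l l' m p h5 hll hm hp)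

end DPW
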